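/- The map (T1,T2) ↦ P_{[T1,T2]} is a bijection from the set of pairs of binary trees of size n with T1 ≤ T2 in the Tamari order onto the set of interval-posets of size n. Moreover, for every such pair, the linear extensions of P_{[T1,T2]} are exactly the permutations lying in the sylvester class of some binary tree T' with T1 ≤ T' ≤ T2. -/

import Mathlib

/-- Planar binary trees: empty, or a node with a left and a right subtree. -/
inductive BinTree : Type where
  | leaf : BinTree
  | node : BinTree → BinTree → BinTree
  deriving DecidableEq

namespace BinTree

/-- Size: number of internal nodes. -/
def size : BinTree → ℕ
  | leaf => 0
  | node l r => l.size + r.size + 1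

/-- `sub T o a b` : in the binary-search-tree labelling of `T` shifted by `o`
(its labels are `o+1, …, o+T.size`), the node labelled `a` lies in the subtree
rooted at the node labelled `b`, i.e. `a ⊴_T b`. -/
def sub : BinTree → ℕ → ℕ → ℕ → Prop
  | leaf, _, _, _ => False
  | node l r, o, a, b =>
      (b = o + l.size + 1 ∧ o + 1 ≤ a ∧ a ≤ o + l.size + r.size + 1) ∨
      l.sub o a b ∨ r.sub (o + l.size + 1) a b

/-- One right rotation, applied at any position of the tree. -/
inductive Rot : BinTree → BinTree → Prop
  | base (A B C : BinTree) : Rot (node (node A B) C) (node A (node B C))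
  | left {l l' : BinTree} (r : BinTree) : Rot l l' → Rot (node l r) (node l' r)
  | right (l : BinTree) {r r' : BinTree} : Rot r r' → Rot (node l r) (node l r')

end BinTree

/-- Tamari order: reflexive-transitive closure of right rotation. -/
def tamariLE : BinTree → BinTree → Prop := Relation.ReflTransGen BinTree.Rot

/-- `incRel T a c` : `a` is below `c` in the initial forest `inc T`. -/
def incRel (T : BinTree) (a c : ℕ) : Prop := a < c ∧ T.sub 0 a c

/-- `decRel T c a` : `c` is below `a` in the final forest `dec T`. -/
def decRel (T : BinTree) (c a : ℕ) : Prop := a < c ∧ T.sub 0 c a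

/-- An interval-poset: a partial order on `{1, …, n}` in which, whenever
`a ⊴ c` and `a < c`, all `a < b < c` satisfy `b ⊴ c`, and whenever `c ⊴ a` and
`a < c`, all `a < b < c` satisfy `b ⊴ a`.  `rel x y` means "`x` is below `y`". -/
structure IntervalPoset : Type where
  n : ℕ
  rel : ℕ → ℕ → Prop
  supp : ∀ a b, rel a b → 1 ≤ a ∧ a ≤ n ∧ 1 ≤ b ∧ b ≤ n
  refl : ∀ a, 1 ≤ a → a ≤ n → rel a a
  antisymm : ∀ a b, rel a b → rel b a → a = b
  trans : ∀ a b c, rel a b → rel b c → rel a c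
  incCond : ∀ a b c, rel a c → a < b → b < c → rel b c
  decCond : ∀ a b c, rel c a → a < b → b < c → rel b a

/-- The partial order on `{1, …, n}` generated by a family `r` of relations. -/
def genClos (n : ℕ) (r : ℕ → ℕ → Prop) : ℕ → ℕ → Prop :=
  fun a b => (a = b ∧ 1 ≤ a ∧ a ≤ n) ∨ Relation.TransGen r a b

/-- The relation of the interval-poset `P_{[T1,T2]}` of a Tamari interval: the
partial order on `{1, …, n}` generated by the relations of `dec T1` together
with those of `inc T2`. -/
def pairRel (n : ℕ) (T1 T2 : BinTree) : ℕ → ℕ → Prop :=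
  genClos n (fun x y => decRel T1 x y ∨ incRel T2 x y)

/-- `IsLinExt n r l` : the list `l` is a linear extension of the (strict or
reflexive) relation `r` ("`x` below `y`") on `{1, …, n}` : it lists `1, …, n`
once each, and `a` appears before `b` whenever `a` is below `b` with `a ≠ b`. -/
def IsLinExt (n : ℕ) (r : ℕ → ℕ → Prop) (l : List ℕ) : Prop :=
  l.Nodup ∧ (∀ x, x ∈ l ↔ 1 ≤ x ∧ x ≤ n) ∧
    ∀ a b, r a b → a ≠ b → l.idxOf a < l.idxOf b

/-!
Everything is read off bracket vectors: for `a < c`, `c ⊴_T a` iff `c ≤ T.subtreeMax 0 a`.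
Right rotations only enlarge final forests (and, by mirror symmetry, shrink initial forests).
Conversely, if `dec S ⊆ dec T` and `S ≠ T`, let `i` be the smallest label with
`subtreeMax S i < subtreeMax T i`; it is the left child of `subtreeMax S i + 1`, and rotating there
keeps `dec S ⊆ dec T`. So `T1 ≤ T2` iff `dec T1 ⊆ dec T2` iff `inc T2 ⊆ inc T1`. Hence both
forests generating `P_{[T1,T2]}` lie inside `⊴_{T1} ∩ ⊴_{T2}`, the transitive closure adds nothing,
and the interval-poset axioms follow from the subtrees of `T1` and `T2` being intervals;
injectivity holds because a tree is determined by its final forest.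

The remaining trees are Cartesian trees: the label of largest key is the root, recursively on
both sides. With the key `a ↦ (maxBelow a, -a)` one gets the tree whose final forest is the
decreasing part of an interval-poset `P`, with `c ↦ (-minBelow c, c)` the tree whose initial forest
is its increasing part, and the positions in a linear extension `σ` of `P_{[T1,T2]}` give a tree
whose sylvester class contains `σ` and which lies between `T1` and `T2`.
-/

namespace BinTree

section Labels

theorem sub_bounds : ∀ {T : BinTree} {o a b : ℕ}, T.sub o a b →
    o < a ∧ a ≤ o + T.size ∧ o < b ∧ b ≤ o + T.size
  | leaf, _, _, _, h => h.elim
  | node l r, o, a, b, h => by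
    rcases h with ⟨rfl, h₁, h₂⟩ | h | h
    · simp only [size]; omega
    · have := sub_bounds h; simp only [size]; omega
    · have := sub_bounds h; simp only [size]; omega

variable {l r : BinTree} {o a b : ℕ}

theorem sub_node_left (hb : b ≤ o + l.size) : (node l r).sub o a b ↔ l.sub o a b := by
  refine ⟨fun h => ?_, fun h => Or.inr (Or.inl h)⟩
  rcases h with ⟨rfl, -, -⟩ | h | h
  · omega
  · exact h
  · exact absurd (sub_bounds h).2.2.1 (by omega)

theorem sub_node_root :
    (node l r).sub o a (o + l.size + 1) ↔ o < a ∧ a ≤ o + (node l r).size := by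
  refine ⟨fun h => ?_, fun h => Or.inl ⟨rfl, h.1, by simpa [size, Nat.add_assoc] using h.2⟩⟩
  have := sub_bounds h
  exact ⟨this.1, this.2.1⟩

theorem sub_node_right (hb : o + l.size + 1 < b) :
    (node l r).sub o a b ↔ r.sub (o + l.size + 1) a b := by
  refine ⟨fun h => ?_, fun h => Or.inr (Or.inr h)⟩
  rcases h with ⟨rfl, -, -⟩ | h | h
  · omega
  · exact absurd (sub_bounds h).2.2.2 (by omega)
  · exact h

theorem sub_refl : ∀ {T : BinTree} {o a : ℕ}, o < a → a ≤ o + T.size → T.sub o a a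
  | leaf, _, _, h₁, h₂ => by simp only [size] at h₂; omega
  | node l r, o, a, h₁, h₂ => by
    simp only [size] at h₂
    rcases lt_trichotomy a (o + l.size + 1) with h | rfl | h
    · exact Or.inr (Or.inl (sub_refl h₁ (by omega)))
    · exact sub_node_root.2 ⟨h₁, by simp only [size]; omega⟩
    · exact Or.inr (Or.inr (sub_refl h (by omega)))

theorem sub_trans : ∀ {T : BinTree} {o a b c : ℕ}, T.sub o a b → T.sub o b c → T.sub o a c
  | leaf, _, _, _, _, h, _ => h.elim
  | node l r, o, a, b, c, hab, hbc => by
    rcases hbc with ⟨rfl, -, -⟩ | hbc | hbc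
    · have := sub_bounds hab
      exact sub_node_root.2 ⟨this.1, this.2.1⟩
    · have := sub_bounds hbc
      exact Or.inr (Or.inl (sub_trans ((sub_node_left (by omega)).1 hab) hbc))
    · have := sub_bounds hbc
      exact Or.inr (Or.inr (sub_trans ((sub_node_right (by omega)).1 hab) hbc))

theorem sub_antisymm : ∀ {T : BinTree} {o a b : ℕ}, T.sub o a b → T.sub o b a → a = b
  | leaf, _, _, _, h, _ => h.elim
  | node l r, o, a, b, hab, hba => by
    rcases hab with ⟨rfl, -, -⟩ | hab | hab
    · rcases hba with ⟨rfl, -, -⟩ | hba | hba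
      · rfl
      · exact absurd (sub_bounds hba).2.1 (by omega)
      · exact absurd (sub_bounds hba).1 (by omega)
    · have := sub_bounds hab
      exact sub_antisymm hab ((sub_node_left (by omega)).1 hba)
    · have := sub_bounds hab
      exact sub_antisymm hab ((sub_node_right (by omega)).1 hba)

theorem sub_of_mem_uIcc : ∀ {T : BinTree} {o a b x : ℕ}, T.sub o a b → x ∈ Set.uIcc a b →
    T.sub o x b
  | leaf, _, _, _, _, h, _ => h.elim
  | node l r, o, a, b, x, h, hx => by
    rw [Set.mem_uIcc] at hx
    rcases h with ⟨rfl, h₁, h₂⟩ | h | h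
    · exact Or.inl ⟨rfl, by omega, by omega⟩
    · exact Or.inr (Or.inl (sub_of_mem_uIcc h (Set.mem_uIcc.2 hx)))
    · exact Or.inr (Or.inr (sub_of_mem_uIcc h (Set.mem_uIcc.2 hx)))

end Labels

theorem Rot.size_eq {S T : BinTree} (h : Rot S T) : S.size = T.size := by
  induction h with
  | base => simp only [size]; omega
  | left _ _ ih => simp only [size, ih]
  | right _ _ ih => simp only [size, ih]

theorem _root_.tamariLE.size_eq {S T : BinTree} (h : tamariLE S T) : S.size = T.size := by
  induction h with
  | refl => rfl
  | tail _ h ih => exact ih.trans h.size_eq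

section SubtreeMax

/-- The largest label in the subtree rooted at the node labelled `b` (the bracket vector of the
tree, read at `b`). -/
def subtreeMax : BinTree → ℕ → ℕ → ℕ
  | leaf, _, _ => 0
  | node l r, o, b =>
    if b ≤ o + l.size then l.subtreeMax o b
    else if b = o + l.size + 1 then o + l.size + r.size + 1
    else r.subtreeMax (o + l.size + 1) b

variable {T : BinTree} {o b x : ℕ}

theorem sub_subtreeMax : ∀ {T : BinTree} {o b : ℕ}, o < b → b ≤ o + T.size →
    T.sub o (T.subtreeMax o b) b
  | leaf, _, _, h₁, h₂ => by simp only [size] at h₂; omega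
  | node l r, o, b, h₁, h₂ => by
    simp only [size] at h₂
    unfold subtreeMax
    split_ifs with hl hρ
    · exact Or.inr (Or.inl (sub_subtreeMax h₁ hl))
    · exact Or.inl ⟨hρ, by omega, by omega⟩
    · exact Or.inr (Or.inr (sub_subtreeMax (by omega) (by omega)))

theorem le_subtreeMax_of_sub : ∀ {T : BinTree} {o x b : ℕ}, T.sub o x b → x ≤ T.subtreeMax o b
  | leaf, _, _, _, h => h.elim
  | node l r, o, x, b, h => by
    unfold subtreeMax
    rcases h with ⟨rfl, -, hx⟩ | h | h
    · rw [if_neg (by omega), if_pos rfl]; omega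
    · have := sub_bounds h
      rw [if_pos (by omega)]
      exact le_subtreeMax_of_sub h
    · have := sub_bounds h
      rw [if_neg (by omega), if_neg (by omega)]
      exact le_subtreeMax_of_sub h

theorem le_subtreeMax (h₁ : o < b) (h₂ : b ≤ o + T.size) : b ≤ T.subtreeMax o b :=
  le_subtreeMax_of_sub (sub_refl h₁ h₂)

theorem subtreeMax_le (h₁ : o < b) (h₂ : b ≤ o + T.size) : T.subtreeMax o b ≤ o + T.size :=
  (sub_bounds (sub_subtreeMax h₁ h₂)).2.1

theorem sub_iff_le_subtreeMax (h₁ : o < b) (h₂ : b ≤ o + T.size) (hbx : b < x) :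
    T.sub o x b ↔ x ≤ T.subtreeMax o b :=
  ⟨le_subtreeMax_of_sub, fun h =>
    sub_of_mem_uIcc (sub_subtreeMax h₁ h₂) (Set.mem_uIcc.2 (Or.inr ⟨hbx.le, h⟩))⟩

theorem subtreeMax_mono {a : ℕ} (h : T.sub o a b) : T.subtreeMax o a ≤ T.subtreeMax o b := by
  have := sub_bounds h
  exact le_subtreeMax_of_sub (sub_trans (sub_subtreeMax this.1 this.2.1) h)

end SubtreeMax

section Mirror

def mirror : BinTree → BinTree
  | leaf => leaf
  | node l r => node r.mirror l.mirror

@[simp] theorem size_mirror : ∀ T : BinTree, T.mirror.size = T.size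
  | leaf => rfl
  | node l r => by simp only [mirror, size, size_mirror]; omega

@[simp] theorem mirror_mirror : ∀ T : BinTree, T.mirror.mirror = T
  | leaf => rfl
  | node l r => by simp only [mirror, mirror_mirror]

theorem sub_mirror : ∀ {T : BinTree} {o o' a b a' b' : ℕ}, T.sub o a b →
    a + a' = o + o' + T.size + 1 → b + b' = o + o' + T.size + 1 → T.mirror.sub o' a' b'
  | leaf, _, _, _, _, _, _, h, _, _ => h.elim
  | node l r, o, o', a, b, a', b', h, ha, hb => by
    simp only [size] at ha hb
    rcases h with ⟨rfl, h₁, h₂⟩ | h | h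
    · exact Or.inl ⟨by simp only [size_mirror]; omega, by omega, by simp only [size_mirror]; omega⟩
    · exact Or.inr (Or.inr (sub_mirror h (by simp only [size_mirror]; omega)
        (by simp only [size_mirror]; omega)))
    · exact Or.inr (Or.inl (sub_mirror h (by omega) (by omega)))

theorem sub_mirror_iff {T : BinTree} {o o' a b a' b' : ℕ} (ha : a + a' = o + o' + T.size + 1)
    (hb : b + b' = o + o' + T.size + 1) : T.mirror.sub o' a' b' ↔ T.sub o a b := by
  refine ⟨fun h => ?_, fun h => sub_mirror h ha hb⟩
  simpa using sub_mirror h (o' := o) (by simp only [size_mirror]; omega)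
    (by simp only [size_mirror]; omega)

theorem Rot.mirror {S T : BinTree} (h : Rot S T) : Rot T.mirror S.mirror := by
  induction h with
  | base A B C => exact Rot.base C.mirror B.mirror A.mirror
  | left r _ ih => exact Rot.right r.mirror ih
  | right l _ ih => exact Rot.left l.mirror ih

theorem _root_.tamariLE.mirror {S T : BinTree} (h : tamariLE S T) :
    tamariLE T.mirror S.mirror := by
  induction h with
  | refl => exact Relation.ReflTransGen.refl
  | tail _ h ih => exact Relation.ReflTransGen.head h.mirror ih

variable {S T : BinTree} {a c a' c' : ℕ}

theorem decRel_mirror_iff (ha : a + a' = T.size + 1) (hc : c + c' = T.size + 1) :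
    decRel T.mirror a' c' ↔ incRel T a c := by
  unfold decRel incRel
  rw [sub_mirror_iff (o := 0) (o' := 0) (a := a) (b := c) (by omega) (by omega)]
  exact and_congr_left' (by omega)

theorem decRel_mirror_le_iff (h : S.size = T.size) :
    decRel S.mirror ≤ decRel T.mirror ↔ incRel S ≤ incRel T := by
  constructor
  · intro hle a c hac
    have := sub_bounds hac.2
    rw [← decRel_mirror_iff (a' := S.size + 1 - a) (c' := S.size + 1 - c) (by omega) (by omega)]
      at hac
    rw [← decRel_mirror_iff (a' := S.size + 1 - a) (c' := S.size + 1 - c) (by omega) (by omega)]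
    exact hle _ _ hac
  · intro hle a c hac
    have := sub_bounds hac.2
    simp only [size_mirror] at this
    rw [decRel_mirror_iff (a := S.size + 1 - a) (c := S.size + 1 - c) (by omega) (by omega)]
      at hac ⊢
    exact hle _ _ hac

end Mirror

section Forests

theorem Rot.sub_of_sub_of_lt {S S' : BinTree} (h : Rot S S') {o x y : ℕ} (hxy : y < x)
    (hs : S.sub o x y) : S'.sub o x y := by
  induction h generalizing o with
  | base A B C =>
    simp only [sub, size] at hs ⊢
    rcases hs with ⟨_, _, _⟩ | (⟨_, _, _⟩ | hs | hs) | hs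
    · exact Or.inr (Or.inr (Or.inl ⟨by omega, by omega, by omega⟩))
    · exact Or.inl ⟨by omega, by omega, by omega⟩
    · exact Or.inr (Or.inl hs)
    · exact Or.inr (Or.inr (Or.inr (Or.inl hs)))
    · exact Or.inr (Or.inr (Or.inr (Or.inr (by rwa [show o + A.size + 1 + B.size + 1 =
        o + (A.size + B.size + 1) + 1 by omega]))))
  | left r h ih =>
    rcases hs with ⟨_, _, _⟩ | hs | hs
    · exact Or.inl ⟨by rw [← h.size_eq]; omega, by omega, by rw [← h.size_eq]; omega⟩
    · exact Or.inr (Or.inl (ih hs))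
    · exact Or.inr (Or.inr (by rwa [← h.size_eq]))
  | right l h ih =>
    rcases hs with ⟨_, _, _⟩ | hs | hs
    · exact Or.inl ⟨by omega, by omega, by rw [← h.size_eq]; omega⟩
    · exact Or.inr (Or.inl hs)
    · exact Or.inr (Or.inr (ih hs))

theorem _root_.tamariLE.decRel_le {S T : BinTree} (h : tamariLE S T) : decRel S ≤ decRel T := by
  induction h with
  | refl => exact le_rfl
  | tail _ h ih =>
    exact fun c a hca => ⟨(ih c a hca).1, h.sub_of_sub_of_lt (ih c a hca).1 (ih c a hca).2⟩

theorem _root_.tamariLE.incRel_le {S T : BinTree} (h : tamariLE S T) : incRel T ≤ incRel S :=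
  (decRel_mirror_le_iff h.size_eq.symm).1 h.mirror.decRel_le

theorem size_left_le_of_sub_lt {l r l' r' : BinTree} {o : ℕ}
    (hsize : (node l r).size = (node l' r').size)
    (h : ∀ a c, a < c → (node l r).sub o c a → (node l' r').sub o c a) : l'.size ≤ l.size := by
  by_contra! hlt
  simp only [size] at hsize
  have hroot : (node l r).sub o (o + l.size + r.size + 1) (o + l.size + 1) :=
    sub_node_root.2 ⟨by omega, by simp only [size]; omega⟩
  have := sub_bounds ((sub_node_left (by omega)).1 (h _ _ (by omega) hroot))
  omega

theorem eq_of_sub_iff_of_lt : ∀ {S T : BinTree} {o : ℕ}, S.size = T.size →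
    (∀ a c, a < c → (S.sub o c a ↔ T.sub o c a)) → S = T
  | leaf, leaf, _, _, _ => rfl
  | leaf, node _ _, _, hsize, _ | node _ _, leaf, _, hsize, _ => by simp only [size] at hsize; omega
  | node l r, node l' r', o, hsize, h => by
    have hl : l.size = l'.size :=
      le_antisymm (size_left_le_of_sub_lt hsize.symm fun a c hac => (h a c hac).2)
        (size_left_le_of_sub_lt hsize fun a c hac => (h a c hac).1)
    have hr : r.size = r'.size := by simp only [size] at hsize; omega
    congr 1
    · refine eq_of_sub_iff_of_lt (o := o) hl fun a c hac => ?_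
      by_cases ha : a ≤ o + l.size
      · have := h a c hac
        rwa [sub_node_left ha, sub_node_left (by omega)] at this
      · constructor <;> intro hs <;> have := sub_bounds hs <;> omega
    · refine eq_of_sub_iff_of_lt (o := o + l.size + 1) hr fun a c hac => ?_
      by_cases ha : o + l.size + 1 < a
      · have := h a c hac
        rwa [sub_node_right ha, sub_node_right (by omega), ← hl] at this
      · constructor <;> intro hs <;> have := sub_bounds hs <;> omega

theorem eq_of_decRel_eq {S T : BinTree} (hsize : S.size = T.size) (h : decRel S = decRel T) :
    S = T :=
  eq_of_sub_iff_of_lt (o := 0) hsize fun a c hac => by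
    simpa only [decRel, hac, true_and] using iff_of_eq (congrFun₂ h c a)

theorem eq_of_incRel_eq {S T : BinTree} (hsize : S.size = T.size) (h : incRel S = incRel T) :
    S = T := by
  have hle : ∀ {U V : BinTree}, U.size = V.size → incRel U = incRel V →
      decRel U.mirror ≤ decRel V.mirror := fun hUV h => (decRel_mirror_le_iff hUV).2 h.le
  simpa using congrArg mirror (eq_of_decRel_eq (by simpa using hsize)
    ((hle hsize h).antisymm (hle hsize.symm h.symm)))

theorem decRel_le_iff {S T : BinTree} (hsize : S.size = T.size) :
    decRel S ≤ decRel T ↔ ∀ a, 0 < a → a ≤ S.size → S.subtreeMax 0 a ≤ T.subtreeMax 0 a := by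
  constructor
  · intro h a h₁ h₂
    have h₂' : a ≤ 0 + S.size := by omega
    rcases (le_subtreeMax h₁ h₂').lt_or_eq with hlt | heq
    · exact le_subtreeMax_of_sub (h _ _ ⟨hlt, sub_subtreeMax h₁ h₂'⟩).2
    · exact heq ▸ le_subtreeMax h₁ (by omega)
  · rintro h c a ⟨hac, hs⟩
    have := sub_bounds hs
    exact ⟨hac, (sub_iff_le_subtreeMax this.2.2.1 (by omega) hac).2
      ((le_subtreeMax_of_sub hs).trans (h a this.2.2.1 (by omega)))⟩

theorem exists_subtreeMax_lt {S T : BinTree} (hsize : S.size = T.size)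
    (h : decRel S ≤ decRel T) (hne : S ≠ T) :
    ∃ a, 0 < a ∧ a ≤ S.size ∧ S.subtreeMax 0 a < T.subtreeMax 0 a := by
  by_contra! hge
  refine hne (eq_of_decRel_eq hsize (h.antisymm ((decRel_le_iff hsize.symm).2 ?_)))
  exact fun a h₁ h₂ => hge a h₁ (by omega)

end Forests

section Rotation

/-- `T.IsLeftChild o i j`: the node labelled `i` is the root of the left subtree of the node
labelled `j`. -/
def IsLeftChild (T : BinTree) (o i j : ℕ) : Prop :=
  i < j ∧ T.sub o i j ∧ ∀ x < j, T.sub o x j → T.sub o x i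

variable {l r : BinTree} {o i j : ℕ}

theorem isLeftChild_node_left_iff (hj : j ≤ o + l.size) :
    (node l r).IsLeftChild o i j ↔ l.IsLeftChild o i j := by
  unfold IsLeftChild
  refine and_congr_right fun hij => ?_
  rw [sub_node_left hj]
  refine and_congr_right fun _ => forall₂_congr fun x _ => ?_
  rw [sub_node_left hj, sub_node_left (by omega)]

theorem isLeftChild_node_right_iff (hj : o + l.size + 1 < j) :
    (node l r).IsLeftChild o i j ↔ r.IsLeftChild (o + l.size + 1) i j := by
  unfold IsLeftChild
  refine and_congr_right fun hij => ?_
  rw [sub_node_right hj]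
  refine ⟨fun ⟨hi, h⟩ => ?_, fun ⟨hi, h⟩ => ?_⟩ <;> have := sub_bounds hi
  · exact ⟨hi, fun x hx hxj =>
      (sub_node_right this.1).1 (h x hx ((sub_node_right hj).2 hxj))⟩
  · exact ⟨hi, fun x hx hxj =>
      (sub_node_right this.1).2 (h x hx ((sub_node_right hj).1 hxj))⟩

theorem IsLeftChild.exists_rot : ∀ {S : BinTree} {o i j : ℕ}, S.IsLeftChild o i j →
    ∃ S', Rot S S' ∧ S'.subtreeMax o i = S.subtreeMax o j ∧
      ∀ y ≠ i, S'.subtreeMax o y = S.subtreeMax o y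
  | leaf, _, _, _, h => h.2.1.elim
  | node l r, o, i, j, h => by
    rcases lt_trichotomy j (o + l.size + 1) with hj | rfl | hj
    · obtain ⟨l', hrot, hi, hy⟩ := ((isLeftChild_node_left_iff (by omega)).1 h).exists_rot
      have hsize := hrot.size_eq
      have := h.1
      refine ⟨node l' r, Rot.left r hrot, ?_, fun y hyi => ?_⟩
      · simp only [subtreeMax, if_pos (show i ≤ o + l'.size by omega),
          if_pos (show j ≤ o + l.size by omega), hi]
      · simp only [subtreeMax, ← hsize]
        split_ifs
        exacts [hy y hyi, rfl, rfl]
    · obtain ⟨hij, hsub, hcov⟩ := h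
      have hi := sub_bounds hsub
      cases l with
      | leaf => simp only [size] at hij hi; omega
      | node A B =>
        have hroot : i = o + A.size + 1 := by
          have hq : (node (node A B) r).sub o (o + A.size + 1) (o + (node A B).size + 1) :=
            sub_node_root.2 ⟨by omega, by simp only [size]; omega⟩
          refine sub_antisymm ?_ (hcov _ (by simp only [size]; omega) hq)
          exact (sub_node_left (by simp only [size]; omega)).2 (sub_node_root.2 ⟨hi.1, by omega⟩)
        subst hroot
        have hAB : (node A B).size = A.size + B.size + 1 := rfl
        have hBr : (node B r).size = B.size + r.size + 1 := rfl
        refine ⟨node A (node B r), Rot.base A B r, ?_, fun y hyi => ?_⟩ <;>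
          simp only [subtreeMax] <;> split_ifs <;> first | rfl | omega | (congr 1; omega)
    · have hr := (isLeftChild_node_right_iff hj).1 h
      have hi := sub_bounds hr.2.1
      obtain ⟨r', hrot, hi', hy⟩ := hr.exists_rot
      refine ⟨node l r', Rot.right l hrot, ?_, fun y hyi => ?_⟩
      · simp only [subtreeMax, if_neg (show ¬i ≤ o + l.size by omega),
          if_neg (show i ≠ o + l.size + 1 by omega), if_neg (show ¬j ≤ o + l.size by omega),
          if_neg (show j ≠ o + l.size + 1 by omega), hi']
      · simp only [subtreeMax, ← hrot.size_eq]
        split_ifs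
        exacts [rfl, rfl, hy y hyi]

/-- A node `i` off the right spine is the left child of the label following its subtree, or else
the right child of its parent `p`. -/
theorem isLeftChild_or_exists_parent : ∀ {S : BinTree} {o i : ℕ}, o < i → i ≤ o + S.size →
    S.subtreeMax o i < o + S.size →
    S.IsLeftChild o i (S.subtreeMax o i + 1) ∨
      ∃ p < i, S.sub o i p ∧ S.subtreeMax o p = S.subtreeMax o i
  | leaf, _, _, h₁, h₂, _ => by simp only [size] at h₂; omega
  | node l r, o, i, h₁, h₂, hmax => by
    simp only [size] at h₂ hmax
    rcases lt_trichotomy i (o + l.size + 1) with hi | rfl | hi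
    · have hil : i ≤ o + l.size := by omega
      rw [subtreeMax, if_pos hil] at hmax ⊢
      rcases (subtreeMax_le h₁ hil).lt_or_eq with hlt | heq
      · rcases isLeftChild_or_exists_parent h₁ hil hlt with h | ⟨p, hpi, hsub, hp⟩
        · exact Or.inl ((isLeftChild_node_left_iff (by omega)).2 h)
        · refine Or.inr ⟨p, hpi, Or.inr (Or.inl hsub), ?_⟩
          rwa [subtreeMax, if_pos (by omega)]
      · rw [heq]
        cases l with
        | leaf => simp only [size] at hil; omega
        | node A B =>
          simp only [size] at hil heq ⊢
          rcases lt_trichotomy i (o + A.size + 1) with hiA | rfl | hiB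
          · have := subtreeMax_le (T := A) h₁ (by omega)
            rw [subtreeMax, if_pos (by omega)] at heq
            omega
          · refine Or.inl ⟨by omega, sub_node_root.2 ⟨h₁, by simp only [size]; omega⟩,
              fun x hx hsub => ?_⟩
            have := sub_bounds hsub
            exact Or.inr (Or.inl (sub_node_root.2 ⟨this.1, by simp only [size]; omega⟩))
          · refine Or.inr ⟨o + A.size + 1, hiB, Or.inr (Or.inl ?_), ?_⟩
            · exact sub_node_root.2 ⟨h₁, by simp only [size]; omega⟩
            · rw [subtreeMax, if_pos (by simp only [size]; omega), subtreeMax,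
                if_neg (by omega), if_pos rfl]
              omega
    · rw [subtreeMax, if_neg (by omega), if_pos rfl] at hmax
      omega
    · have hir : ¬i ≤ o + l.size ∧ i ≠ o + l.size + 1 := ⟨by omega, by omega⟩
      rw [subtreeMax, if_neg hir.1, if_neg hir.2] at hmax ⊢
      rcases isLeftChild_or_exists_parent (S := r) hi (by omega) (by omega) with
        h | ⟨p, hpi, hsub, hp⟩
      · have := le_subtreeMax (T := r) hi (by omega)
        exact Or.inl ((isLeftChild_node_right_iff (by omega)).2 h)
      · have := sub_bounds hsub
        refine Or.inr ⟨p, hpi, Or.inr (Or.inr hsub), ?_⟩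
        rwa [subtreeMax, if_neg (by omega), if_neg (by omega)]

/-- Rotating at the parent of the smallest label whose subtree in `S` is smaller than in `T`
moves `S` towards `T`. -/
theorem exists_rot_decRel_le {S T : BinTree} (hsize : S.size = T.size) (h : decRel S ≤ decRel T)
    (hne : S ≠ T) : ∃ S', Rot S S' ∧ decRel S' ≤ decRel T ∧
      ∑ a ∈ Finset.Ioc 0 S.size, (S.size - S'.subtreeMax 0 a) <
        ∑ a ∈ Finset.Ioc 0 S.size, (S.size - S.subtreeMax 0 a) := by
  classical
  have hle := (decRel_le_iff hsize).1 h
  have hgap := exists_subtreeMax_lt hsize h hne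
  obtain ⟨hi₁, hi₂, hi⟩ := Nat.find_spec hgap
  have hmin := fun p => Nat.find_min (m := p) hgap
  generalize Nat.find hgap = i at hi₁ hi₂ hi hmin
  have hiT := subtreeMax_le (T := T) (o := 0) hi₁ (by omega)
  rcases isLeftChild_or_exists_parent (S := S) (o := 0) hi₁ (by omega) (by omega) with
    hchild | ⟨p, hpi, hip, hp⟩
  · obtain ⟨S', hrot, hmax, hmax'⟩ := hchild.exists_rot
    have hii : i ≤ S.subtreeMax 0 i := le_subtreeMax hi₁ (by omega)
    set j := S.subtreeMax 0 i + 1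
    have hj : j ≤ S.subtreeMax 0 j := le_subtreeMax (by omega) (by omega)
    have hjT : T.subtreeMax 0 j ≤ T.subtreeMax 0 i :=
      subtreeMax_mono ((sub_iff_le_subtreeMax (x := j) hi₁ (by omega) (by omega)).2 hi)
    refine ⟨S', hrot, (decRel_le_iff (hrot.size_eq.symm.trans hsize)).2 fun a h₁ h₂ => ?_, ?_⟩
    · rw [← hrot.size_eq] at h₂
      by_cases hai : a = i
      · rw [hai, hmax]
        exact (hle j (by omega) (by omega)).trans hjT
      · rw [hmax' a hai]
        exact hle a h₁ h₂
    · refine Finset.sum_lt_sum (fun a _ => ?_) ⟨i, Finset.mem_Ioc.2 ⟨hi₁, hi₂⟩, ?_⟩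
      · by_cases hai : a = i
        · rw [hai, hmax]; omega
        · rw [hmax' a hai]
      · rw [hmax]; omega
  · have hpT := subtreeMax_mono (h i p ⟨hpi, hip⟩).2
    have := sub_bounds hip
    exact (hmin p hpi ⟨this.2.2.1, by omega, by omega⟩).elim

theorem _root_.tamariLE_of_decRel_le {S T : BinTree} (hsize : S.size = T.size)
    (h : decRel S ≤ decRel T) : tamariLE S T := by
  by_cases hST : S = T
  · exact hST ▸ Relation.ReflTransGen.refl
  obtain ⟨S', hrot, h', _⟩ := exists_rot_decRel_le hsize h hST
  exact Relation.ReflTransGen.head hrot (tamariLE_of_decRel_le (hrot.size_eq.symm.trans hsize) h')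
termination_by ∑ a ∈ Finset.Ioc 0 S.size, (S.size - S.subtreeMax 0 a)
decreasing_by rwa [← hrot.size_eq]

theorem _root_.tamariLE_of_incRel_le {S T : BinTree} (hsize : S.size = T.size)
    (h : incRel T ≤ incRel S) : tamariLE S T := by
  simpa using (tamariLE_of_decRel_le (by simpa using hsize.symm)
    ((decRel_mirror_le_iff hsize.symm).2 h)).mirror

end Rotation

section Cartesian

variable {α : Type*} [LinearOrder α] (p : ℕ → α)

noncomputable def peak (o n : ℕ) : ℕ :=
  (Finset.exists_max_image (Finset.Ioc o (o + n + 1)) p ⟨o + n + 1, by simp⟩).choose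

theorem peak_mem (o n : ℕ) : o < peak p o n ∧ peak p o n ≤ o + n + 1 :=
  Finset.mem_Ioc.1
    (Finset.exists_max_image (Finset.Ioc o (o + n + 1)) p ⟨o + n + 1, by simp⟩).choose_spec.1

theorem le_peak {o n v : ℕ} (h₁ : o < v) (h₂ : v ≤ o + n + 1) : p v ≤ p (peak p o n) :=
  (Finset.exists_max_image (Finset.Ioc o (o + n + 1)) p ⟨o + n + 1, by simp⟩).choose_spec.2 v
    (Finset.mem_Ioc.2 ⟨h₁, h₂⟩)

/-- The Cartesian tree of the key `p` on the labels `o + 1, …, o + n`, with the largest key at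
the root. -/
noncomputable def cartesian : ℕ → ℕ → BinTree
  | _, 0 => leaf
  | o, n + 1 =>
    node (cartesian o (peak p o n - o - 1)) (cartesian (peak p o n) (o + n + 1 - peak p o n))
termination_by _ n => n
decreasing_by all_goals have := peak_mem p o n; omega

theorem size_cartesian (o n : ℕ) : (cartesian p o n).size = n := by
  induction n using Nat.strong_induction_on generalizing o with
  | _ n ih =>
    cases n with
    | zero => rw [cartesian, size]
    | succ n =>
      have := peak_mem p o n
      rw [cartesian, size, ih _ (by omega), ih _ (by omega)]
      omega

theorem sub_cartesian_iff {o n z w : ℕ} (hp : Set.InjOn p (Set.Ioc o (o + n)))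
    (hz : z ∈ Set.Ioc o (o + n)) (hw : w ∈ Set.Ioc o (o + n)) :
    (cartesian p o n).sub o z w ↔ ∀ v ∈ Set.uIcc z w, p v ≤ p w := by
  induction n using Nat.strong_induction_on generalizing o z w with
  | _ n ih =>
    rw [Set.mem_Ioc] at hz hw
    cases n with
    | zero => omega
    | succ n =>
      rw [cartesian]
      have hpeak : ∀ v, o < v → v ≤ o + n + 1 → p v ≤ p (peak p o n) := fun v => le_peak p
      obtain ⟨hr₁, hr₂⟩ := peak_mem p o n
      generalize peak p o n = r at hr₁ hr₂ hpeak ⊢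
      have hL := size_cartesian p o (r - o - 1)
      have hmax : ∀ v ∈ Set.uIcc z w, p v ≤ p r := fun v hv => by
        rw [Set.mem_uIcc] at hv
        exact hpeak v (by omega) (by omega)
      have hnot : ∀ {x}, x ∈ Set.uIcc z w → w ≠ r → x = r → ¬∀ v ∈ Set.uIcc z w, p v ≤ p w :=
        fun hx hwr hxr h => hwr (hp (by simp only [Set.mem_Ioc]; omega)
          (by simp only [Set.mem_Ioc]; omega)
          ((hmax w Set.right_mem_uIcc).antisymm (hxr ▸ h _ hx)))
      rcases lt_trichotomy w r with hwr | rfl | hwr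
      · rw [sub_node_left (by omega)]
        by_cases hzr : z < r
        · exact ih _ (by omega) (hp.mono (Set.Ioc_subset_Ioc_right (by omega)))
            ⟨hz.1, by omega⟩ ⟨hw.1, by omega⟩
        · refine iff_of_false (fun h => ?_) (hnot (Set.mem_uIcc.2 (.inr ⟨hwr.le, by omega⟩))
            hwr.ne rfl)
          have := sub_bounds h
          omega
      · refine iff_of_true (Or.inl ⟨by omega, by omega, ?_⟩) hmax
        simp only [size_cartesian]
        omega
      · rw [sub_node_right (by omega), show o + (cartesian p o (r - o - 1)).size + 1 = r by omega]
        by_cases hzr : r < z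
        · exact ih _ (by omega) (hp.mono (Set.Ioc_subset_Ioc (by omega) (by omega)))
            ⟨hzr, by omega⟩ ⟨hwr, by omega⟩
        · refine iff_of_false (fun h => ?_) (hnot (Set.mem_uIcc.2 (.inl ⟨by omega, hwr.le⟩))
            hwr.ne' rfl)
          have := sub_bounds h
          omega

end Cartesian

section LinearExtension

variable {n : ℕ} {r : ℕ → ℕ → Prop} {σ : List ℕ}

theorem injOn_idxOf (hσ : IsLinExt n r σ) : Set.InjOn σ.idxOf (Set.Ioc 0 (0 + n)) :=
  fun x hx _ _ hxy => (List.idxOf_inj ((hσ.2.1 x).2 ⟨hx.1, by simpa using hx.2⟩)).1 hxy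

theorem isLinExt_cartesian_idxOf (hσ : IsLinExt n r σ) :
    IsLinExt n (fun a b => (cartesian σ.idxOf 0 n).sub 0 a b) σ := by
  refine ⟨hσ.1, hσ.2.1, fun a b hab hne => ?_⟩
  have := sub_bounds hab
  rw [size_cartesian] at this
  have hle := (sub_cartesian_iff _ (injOn_idxOf hσ) ⟨this.1, this.2.1⟩ ⟨this.2.2.1, this.2.2.2⟩).1
    hab a Set.left_mem_uIcc
  exact hle.lt_of_ne fun h => hne ((List.idxOf_inj ((hσ.2.1 a).2 ⟨this.1, by omega⟩)).1 h)

theorem sub_cartesian_idxOf (hσ : IsLinExt n r σ) {z w : ℕ} (hz : z ∈ Set.Ioc 0 n)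
    (hw : w ∈ Set.Ioc 0 n) (h : ∀ v ∈ Set.uIcc z w, v ≠ w → r v w) :
    (cartesian σ.idxOf 0 n).sub 0 z w := by
  rw [sub_cartesian_iff _ (injOn_idxOf hσ) (by simpa using hz) (by simpa using hw)]
  intro v hv
  by_cases hvw : v = w
  · exact hvw ▸ le_rfl
  · exact (hσ.2.2 v w (h v hv hvw) hvw).le

end LinearExtension

end BinTree

namespace IntervalPoset

variable (P : IntervalPoset) {a c v : ℕ}

noncomputable def maxBelow (a : ℕ) : ℕ := sSup {c | P.rel c a}

noncomputable def minBelow (c : ℕ) : ℕ := sInf {a | P.rel a c}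

theorem bddAbove_rel (a : ℕ) : BddAbove {c | P.rel c a} :=
  ⟨P.n, fun c hc => (P.supp c a hc).2.1⟩

theorem le_maxBelow (h : P.rel c a) : c ≤ P.maxBelow a := le_csSup (P.bddAbove_rel a) h

theorem rel_maxBelow (h₁ : 1 ≤ a) (h₂ : a ≤ P.n) : P.rel (P.maxBelow a) a :=
  Nat.sSup_mem (s := {c | P.rel c a}) ⟨a, P.refl a h₁ h₂⟩ (P.bddAbove_rel a)

theorem minBelow_le (h : P.rel a c) : P.minBelow c ≤ a := Nat.sInf_le h

theorem rel_minBelow (h₁ : 1 ≤ c) (h₂ : c ≤ P.n) : P.rel (P.minBelow c) c :=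
  Nat.sInf_mem (s := {a | P.rel a c}) ⟨c, P.refl c h₁ h₂⟩

theorem rel_of_le_maxBelow (h₁ : 1 ≤ a) (h₂ : a ≤ P.n) (hav : a ≤ v) (hv : v ≤ P.maxBelow a) :
    P.rel v a := by
  rcases hav.lt_or_eq with hav | rfl
  · rcases hv.lt_or_eq with hv | rfl
    · exact P.decCond a v _ (P.rel_maxBelow h₁ h₂) hav hv
    · exact P.rel_maxBelow h₁ h₂
  · exact P.refl _ h₁ h₂

theorem rel_of_minBelow_le (h₁ : 1 ≤ c) (h₂ : c ≤ P.n) (hv : P.minBelow c ≤ v) (hvc : v ≤ c) :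
    P.rel v c := by
  rcases hvc.lt_or_eq with hvc | rfl
  · rcases hv.lt_or_eq with hv | rfl
    · exact P.incCond _ v c (P.rel_minBelow h₁ h₂) hv hvc
    · exact P.rel_minBelow h₁ h₂
  · exact P.refl _ h₁ h₂

theorem maxBelow_mono (h : P.rel v a) : P.maxBelow v ≤ P.maxBelow a := by
  have := P.supp v a h
  exact P.le_maxBelow (P.trans _ _ _ (P.rel_maxBelow this.1 this.2.1) h)

theorem minBelow_anti (h : P.rel v c) : P.minBelow c ≤ P.minBelow v := by
  have := P.supp v c h
  exact P.minBelow_le (P.trans _ _ _ (P.rel_minBelow this.1 this.2.1) h)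

theorem minBelow_lt_minBelow (hav : a < v) (h : P.rel v a) : P.minBelow a < P.minBelow v := by
  refine (P.minBelow_anti h).lt_of_ne fun heq => absurd (P.antisymm a v ?_ h) hav.ne
  have := P.supp v a h
  have hmin := P.rel_minBelow (c := v) (by omega) this.2.1
  rcases (heq ▸ P.minBelow_le (P.refl a this.2.2.1 this.2.2.2)).lt_or_eq with hlt | heq'
  · exact P.incCond _ a v hmin (heq ▸ hlt) hav
  · exact heq' ▸ heq ▸ hmin

/-- Ties in `maxBelow` are broken towards the smaller label, so that `a` gets the largest key
among `a, …, P.maxBelow a`. -/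
noncomputable def lowerKey (a : ℕ) : Lex (ℕ × ℕᵒᵈ) := toLex (P.maxBelow a, OrderDual.toDual a)

/-- Ties in `minBelow` are broken towards the larger label, so that `c` gets the largest key
among `P.minBelow c, …, c`. -/
noncomputable def upperKey (c : ℕ) : Lex (ℕᵒᵈ × ℕ) := toLex (OrderDual.toDual (P.minBelow c), c)

theorem lowerKey_injective : Function.Injective P.lowerKey :=
  fun _ _ h => (by simpa [lowerKey] using h : _ ∧ _).2

theorem upperKey_injective : Function.Injective P.upperKey :=
  fun _ _ h => (by simpa [upperKey] using h : _ ∧ _).2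

noncomputable def lowerTree : BinTree := BinTree.cartesian P.lowerKey 0 P.n

noncomputable def upperTree : BinTree := BinTree.cartesian P.upperKey 0 P.n

@[simp] theorem size_lowerTree : P.lowerTree.size = P.n := BinTree.size_cartesian _ _ _

@[simp] theorem size_upperTree : P.upperTree.size = P.n := BinTree.size_cartesian _ _ _

theorem decRel_lowerTree_iff : decRel P.lowerTree c a ↔ a < c ∧ P.rel c a := by
  refine and_congr_right fun hac => ?_
  by_cases hr : 1 ≤ a ∧ c ≤ P.n
  swap
  · refine iff_of_false (fun h => hr ?_) (fun h => hr ?_)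
    · have := BinTree.sub_bounds h; simp only [size_lowerTree] at this; omega
    · have := P.supp c a h; omega
  have hrel : P.rel c a ↔ c ≤ P.maxBelow a :=
    ⟨P.le_maxBelow, P.rel_of_le_maxBelow hr.1 (by omega) hac.le⟩
  rw [lowerTree, BinTree.sub_cartesian_iff _ P.lowerKey_injective.injOn ⟨by omega, by omega⟩
      ⟨by omega, by omega⟩, Set.uIcc_of_ge hac.le, hrel]
  simp only [Set.mem_Icc, lowerKey, Prod.Lex.toLex_le_toLex, OrderDual.toDual_le_toDual]
  constructor
  · intro h
    by_contra! hlt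
    have ha := P.le_maxBelow (P.refl a hr.1 (by omega))
    have hv := P.le_maxBelow (P.refl (a := P.maxBelow a + 1) (by omega) (by omega))
    have := h (P.maxBelow a + 1) ⟨by omega, by omega⟩
    omega
  · rintro h v ⟨hav, hvc⟩
    have := P.maxBelow_mono (P.rel_of_le_maxBelow hr.1 (by omega) hav (hvc.trans h))
    omega

theorem incRel_upperTree_iff : incRel P.upperTree a c ↔ a < c ∧ P.rel a c := by
  refine and_congr_right fun hac => ?_
  by_cases hr : 1 ≤ a ∧ c ≤ P.n
  swap
  · refine iff_of_false (fun h => hr ?_) (fun h => hr ?_)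
    · have := BinTree.sub_bounds h; simp only [size_upperTree] at this; omega
    · have := P.supp a c h; omega
  have hrel : P.rel a c ↔ P.minBelow c ≤ a :=
    ⟨P.minBelow_le, fun h => P.rel_of_minBelow_le (by omega) hr.2 h hac.le⟩
  rw [upperTree, BinTree.sub_cartesian_iff _ P.upperKey_injective.injOn ⟨by omega, by omega⟩
      ⟨by omega, by omega⟩, Set.uIcc_of_le hac.le, hrel]
  simp only [Set.mem_Icc, upperKey, Prod.Lex.toLex_le_toLex, OrderDual.toDual_lt_toDual,
    OrderDual.toDual_inj]
  constructor
  · intro h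
    by_contra! hlt
    have hc := P.minBelow_le (P.refl c (by omega) hr.2)
    have hv := P.minBelow_le (P.refl (a := P.minBelow c - 1) (by omega) (by omega))
    have := h (P.minBelow c - 1) ⟨by omega, by omega⟩
    omega
  · rintro h v ⟨hav, hvc⟩
    have := P.minBelow_anti (P.rel_of_minBelow_le (by omega) hr.2 (h.trans hav) hvc)
    omega

theorem decRel_upperTree_of_rel (hac : a < c) (h : P.rel c a) : decRel P.upperTree c a := by
  have hr := P.supp c a h
  refine ⟨hac, ?_⟩
  rw [upperTree, BinTree.sub_cartesian_iff _ P.upperKey_injective.injOn ⟨by omega, by omega⟩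
      ⟨by omega, by omega⟩, Set.uIcc_of_ge hac.le]
  simp only [Set.mem_Icc, upperKey, Prod.Lex.toLex_le_toLex, OrderDual.toDual_lt_toDual,
    OrderDual.toDual_inj]
  rintro v ⟨hav, hvc⟩
  rcases hav.lt_or_eq with hav | rfl
  · exact Or.inl (P.minBelow_lt_minBelow hav
      (P.rel_of_le_maxBelow hr.2.2.1 hr.2.2.2 hav.le (hvc.trans (P.le_maxBelow h))))
  · exact Or.inr ⟨rfl, le_rfl⟩

end IntervalPoset

theorem genClos_trans {n : ℕ} {r : ℕ → ℕ → Prop} {a b c : ℕ} (hab : genClos n r a b)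
    (hbc : genClos n r b c) : genClos n r a c := by
  rcases hab with ⟨rfl, -⟩ | hab
  · exact hbc
  rcases hbc with ⟨rfl, -⟩ | hbc
  · exact Or.inr hab
  · exact Or.inr (hab.trans hbc)

section TamariInterval

variable {n : ℕ} {T1 T2 : BinTree} {x y : ℕ}

theorem tamariLE.sub_of_transGen (h : tamariLE T1 T2)
    (hxy : Relation.TransGen (fun x y => decRel T1 x y ∨ incRel T2 x y) x y) :
    T1.sub 0 x y ∧ T2.sub 0 x y := by
  have step : ∀ {u v}, decRel T1 u v ∨ incRel T2 u v → T1.sub 0 u v ∧ T2.sub 0 u v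
    | _, _, .inl hd => ⟨hd.2, (h.decRel_le _ _ hd).2⟩
    | _, _, .inr hi => ⟨(h.incRel_le _ _ hi).2, hi.2⟩
  induction hxy with
  | single hs => exact step hs
  | tail _ hs ih => exact ⟨BinTree.sub_trans ih.1 (step hs).1, BinTree.sub_trans ih.2 (step hs).2⟩

/-- The transitive closure adds nothing: it stays inside `⊴_{T1} ∩ ⊴_{T2}`, where each relation
is one of `dec T1` or of `inc T2` according to the order of its labels. -/
theorem pairRel_iff (h1 : T1.size = n) (h : tamariLE T1 T2) :
    pairRel n T1 T2 x y ↔ (x = y ∧ 1 ≤ x ∧ x ≤ n) ∨ decRel T1 x y ∨ incRel T2 x y := by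
  refine ⟨fun hxy => ?_, ?_⟩
  · rcases hxy with hxy | hxy
    · exact Or.inl hxy
    obtain ⟨hs1, hs2⟩ := h.sub_of_transGen hxy
    have := BinTree.sub_bounds hs1
    rcases lt_trichotomy x y with hlt | rfl | hlt
    · exact Or.inr (Or.inr ⟨hlt, hs2⟩)
    · exact Or.inl ⟨rfl, by omega, by omega⟩
    · exact Or.inr (Or.inl ⟨hlt, hs1⟩)
  · rintro (hxy | hxy | hxy)
    · exact Or.inl hxy
    · exact Or.inr (.single (.inl hxy))
    · exact Or.inr (.single (.inr hxy))

theorem decRel_iff_pairRel (h1 : T1.size = n) (h : tamariLE T1 T2) :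
    decRel T1 x y ↔ y < x ∧ pairRel n T1 T2 x y := by
  rw [pairRel_iff h1 h]
  exact ⟨fun hd => ⟨hd.1, .inr (.inl hd)⟩, fun ⟨hyx, hxy⟩ => by
    rcases hxy with ⟨rfl, -⟩ | hd | hi
    exacts [absurd hyx (lt_irrefl _), hd, absurd hi.1 (lt_asymm hyx)]⟩

theorem incRel_iff_pairRel (h1 : T1.size = n) (h : tamariLE T1 T2) :
    incRel T2 x y ↔ x < y ∧ pairRel n T1 T2 x y := by
  rw [pairRel_iff h1 h]
  exact ⟨fun hi => ⟨hi.1, .inr (.inr hi)⟩, fun ⟨hxy, hr⟩ => by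
    rcases hr with ⟨rfl, -⟩ | hd | hi
    exacts [absurd hxy (lt_irrefl _), absurd hd.1 (lt_asymm hxy), hi]⟩

theorem exists_intervalPoset_rel_eq_pairRel (h1 : T1.size = n) (h : tamariLE T1 T2) :
    ∃ P : IntervalPoset, P.n = n ∧ P.rel = pairRel n T1 T2 := by
  refine ⟨⟨n, pairRel n T1 T2, fun a b hab => ?_, fun a h₁ h₂ => .inl ⟨rfl, h₁, h₂⟩,
    fun a b hab hba => ?_, fun a b c => genClos_trans, fun a b c hac hab hbc => ?_,
    fun a b c hca hab hbc => ?_⟩, rfl, rfl⟩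
  · rcases (pairRel_iff h1 h).1 hab with ⟨rfl, hb⟩ | hd | hi
    · omega
    · have := BinTree.sub_bounds hd.2; omega
    · have := BinTree.sub_bounds hi.2; have := h.size_eq; omega
  · rcases hab with ⟨rfl, -⟩ | hab
    · rfl
    rcases hba with ⟨rfl, -⟩ | hba
    · rfl
    exact BinTree.sub_antisymm (h.sub_of_transGen hab).1 (h.sub_of_transGen hba).1
  · have hi := ((incRel_iff_pairRel h1 h).2 ⟨by omega, hac⟩).2
    exact ((incRel_iff_pairRel h1 h).1 ⟨hbc,
      BinTree.sub_of_mem_uIcc hi (Set.mem_uIcc.2 (.inl ⟨hab.le, hbc.le⟩))⟩).2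
  · have hd := ((decRel_iff_pairRel h1 h).2 ⟨by omega, hca⟩).2
    exact ((decRel_iff_pairRel h1 h).1 ⟨hab,
      BinTree.sub_of_mem_uIcc hd (Set.mem_uIcc.2 (.inr ⟨hab.le, hbc.le⟩))⟩).2

theorem eq_of_pairRel_eq {U1 U2 : BinTree} (h1 : T1.size = n) (h : tamariLE T1 T2)
    (g1 : U1.size = n) (g : tamariLE U1 U2) (he : pairRel n T1 T2 = pairRel n U1 U2) :
    T1 = U1 ∧ T2 = U2 := by
  refine ⟨BinTree.eq_of_decRel_eq (h1.trans g1.symm) ?_,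
    BinTree.eq_of_incRel_eq (h.size_eq.symm.trans (h1.trans (g1.symm.trans g.size_eq))) ?_⟩
  · ext x y
    rw [decRel_iff_pairRel h1 h, decRel_iff_pairRel g1 g, he]
  · ext x y
    rw [incRel_iff_pairRel h1 h, incRel_iff_pairRel g1 g, he]

theorem IntervalPoset.exists_tamariLE_rel_eq_pairRel (P : IntervalPoset) :
    ∃ T1 T2 : BinTree, T1.size = P.n ∧ T2.size = P.n ∧ tamariLE T1 T2 ∧
      P.rel = pairRel P.n T1 T2 := by
  have htam : tamariLE P.lowerTree P.upperTree := by
    refine tamariLE_of_decRel_le (by simp) fun c a hd => ?_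
    obtain ⟨hac, hrel⟩ := P.decRel_lowerTree_iff.1 hd
    exact P.decRel_upperTree_of_rel hac hrel
  refine ⟨_, _, P.size_lowerTree, P.size_upperTree, htam, ?_⟩
  ext x y
  rw [pairRel_iff P.size_lowerTree htam, P.decRel_lowerTree_iff, P.incRel_upperTree_iff]
  constructor
  · intro hxy
    rcases lt_trichotomy x y with hlt | rfl | hlt
    · exact .inr (.inr ⟨hlt, hxy⟩)
    · have := P.supp x x hxy; exact .inl ⟨rfl, this.1, this.2.1⟩
    · exact .inr (.inl ⟨hlt, hxy⟩)
  · rintro (⟨rfl, h₁, h₂⟩ | ⟨-, hxy⟩ | ⟨-, hxy⟩)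
    exacts [P.refl x h₁ h₂, hxy, hxy]

theorem isLinExt_pairRel_iff (h1 : T1.size = n) (h : tamariLE T1 T2) (σ : List ℕ) :
    IsLinExt n (pairRel n T1 T2) σ ↔ ∃ T' : BinTree, T'.size = n ∧ tamariLE T1 T' ∧
      tamariLE T' T2 ∧ IsLinExt n (fun a b => T'.sub 0 a b) σ := by
  constructor
  · intro hσ
    set T' := BinTree.cartesian σ.idxOf 0 n
    have hsize : T'.size = n := BinTree.size_cartesian _ _ _
    have hlow : decRel T1 ≤ decRel T' := fun c a hd => by
      have := BinTree.sub_bounds hd.2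
      have := hd.1
      refine ⟨hd.1, BinTree.sub_cartesian_idxOf hσ ⟨by omega, by omega⟩ ⟨by omega, by omega⟩
        fun v hv hva => ?_⟩
      have hvc := BinTree.sub_of_mem_uIcc hd.2 hv
      rw [Set.mem_uIcc] at hv
      exact ((decRel_iff_pairRel h1 h).1 ⟨by omega, hvc⟩).2
    have hup : incRel T2 ≤ incRel T' := fun a c hi => by
      have := BinTree.sub_bounds hi.2
      have := h.size_eq
      have := hi.1
      refine ⟨hi.1, BinTree.sub_cartesian_idxOf hσ ⟨by omega, by omega⟩ ⟨by omega, by omega⟩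
        fun v hv hvc => ?_⟩
      have hva := BinTree.sub_of_mem_uIcc hi.2 hv
      rw [Set.mem_uIcc] at hv
      exact ((incRel_iff_pairRel h1 h).1 ⟨by omega, hva⟩).2
    exact ⟨T', hsize, tamariLE_of_decRel_le (h1.trans hsize.symm) hlow,
      tamariLE_of_incRel_le (hsize.trans (h1.symm.trans h.size_eq)) hup,
      BinTree.isLinExt_cartesian_idxOf hσ⟩
  · rintro ⟨T', -, h1', h2', hnd, hmem, hord⟩
    refine ⟨hnd, hmem, fun a b hab hne => ?_⟩
    rcases (pairRel_iff h1 h).1 hab with ⟨rfl, -⟩ | hd | hi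
    · exact absurd rfl hne
    · exact hord a b (h1'.decRel_le _ _ hd).2 hne
    · exact hord a b (h2'.incRel_le _ _ hi).2 hne

end TamariInterval

/-- The map `(T1,T2) ↦ P_{[T1,T2]}` is a bijection from Tamari intervals of
size `n` onto interval-posets of size `n`, and the linear extensions of
`P_{[T1,T2]}` are exactly the members of the sylvester classes of the trees
`T'` with `T1 ≤ T' ≤ T2`. -/
theorem stmt2 (n : ℕ) :
    (∀ T1 T2 : BinTree, T1.size = n → T2.size = n → tamariLE T1 T2 →
      ∃ P : IntervalPoset, P.n = n ∧ P.rel = pairRel n T1 T2) ∧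
    (∀ T1 T2 U1 U2 : BinTree, T1.size = n → T2.size = n → tamariLE T1 T2 →
      U1.size = n → U2.size = n → tamariLE U1 U2 →
      pairRel n T1 T2 = pairRel n U1 U2 → T1 = U1 ∧ T2 = U2) ∧
    (∀ P : IntervalPoset, P.n = n →
      ∃ T1 T2 : BinTree, T1.size = n ∧ T2.size = n ∧ tamariLE T1 T2 ∧
        P.rel = pairRel n T1 T2) ∧
    (∀ T1 T2 : BinTree, T1.size = n → T2.size = n → tamariLE T1 T2 →
      ∀ σ : List ℕ, IsLinExt n (pairRel n T1 T2) σ ↔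
        ∃ T' : BinTree, T'.size = n ∧ tamariLE T1 T' ∧ tamariLE T' T2 ∧
          IsLinExt n (fun a b => T'.sub 0 a b) σ) :=
  ⟨fun _ _ h1 _ h => exists_intervalPoset_rel_eq_pairRel h1 h,
    fun _ _ _ _ h1 _ h g1 _ g => eq_of_pairRel_eq h1 h g1 g,
    fun P hP => hP ▸ P.exists_tamariLE_rel_eq_pairRel,
    fun _ _ h1 _ h => isLinExt_pairRel_iff h1 h⟩
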